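/- arXiv:2512.11419 — 11 statements merged into one kernel-verified Lean document; each statement's English description precedes it below -/
import Mathlib

section
/- Let r, s, t be real numbers with r > 0, s > 0, t > 0 and s² ≥ 4rt. Define a sequence (k_i) by k_1 = s - br/a (where a > 0, b ≥ 0 and a(s + √(s²−4rt))/2 ≥ br) and k_{i+1} = s − rt/k_i for i ≥ 1. Then k_i ≥ (s − √(s²−4rt))/2 > 0 for all i ≥ 1. -/
theorem stmt_0 (a b r s t : ℝ) (ha : 0 < a) (hb : 0 ≤ b)
    (hr : 0 < r) (hs : 0 < s) (ht : 0 < t)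
    (hst : s ^ 2 ≥ 4 * r * t)
    (hab : a * (s + Real.sqrt (s ^ 2 - 4 * r * t)) / 2 ≥ b * r)
    (k : ℕ → ℝ) (hk1 : k 1 = s - b * r / a)
    (hkrec : ∀ i, 1 ≤ i → k (i + 1) = s - r * t / k i) :
    ∀ i, 1 ≤ i →
      k i ≥ (s - Real.sqrt (s ^ 2 - 4 * r * t)) / 2 ∧
      (s - Real.sqrt (s ^ 2 - 4 * r * t)) / 2 > 0 := by
  set d := Real.sqrt (s ^ 2 - 4 * r * t) with hd
  have hnn : 0 ≤ s ^ 2 - 4 * r * t := by linarith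
  have hd0 : 0 ≤ d := Real.sqrt_nonneg _
  have hdsq : d ^ 2 = s ^ 2 - 4 * r * t := Real.sq_sqrt hnn
  have hds : d < s := by
    nlinarith [mul_pos hr ht]
  have hm : 0 < (s - d) / 2 := by linarith
  have hrt : r * t = (s - d) / 2 * ((s + d) / 2) := by nlinarith
  have main : ∀ i, 1 ≤ i → k i ≥ (s - d) / 2 := by
    intro i hi
    induction i with
    | zero => omega
    | succ n ih =>
      rcases Nat.eq_or_lt_of_le hi with h | h
      · have hn : n = 0 := by omega
        subst hn
        rw [hk1]
        have : b * r / a ≤ (s + d) / 2 := by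
          rw [div_le_iff₀ ha] at *
          nlinarith
        linarith
      · have hn : 1 ≤ n := by omega
        have ihn := ih hn
        rw [hkrec n hn]
        have hkn : 0 < k n := lt_of_lt_of_le hm ihn
        have : r * t / k n ≤ (s + d) / 2 := by
          rw [div_le_iff₀ hkn, hrt]
          have : 0 < (s + d) / 2 := by linarith
          nlinarith
        linarith
  intro i hi
  exact ⟨main i hi, hm⟩
end

section
/- Let r, s, t be real numbers with r > 0, s > 0, t > 0 and s² ≥ 4rt. Define k_1 = s and k_{i+1} = s − rt/k_i for i ≥ 1. Then k_i > s/2 > 0 for all i ≥ 2. -/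
theorem stmt_1 (r s t : ℝ) (hr : 0 < r) (hs : 0 < s) (ht : 0 < t)
    (hst : s ^ 2 ≥ 4 * r * t)
    (k : ℕ → ℝ) (hk1 : k 1 = s)
    (hkrec : ∀ i, 1 ≤ i → k (i + 1) = s - r * t / k i) :
    ∀ i, 2 ≤ i → k i > s / 2 ∧ s / 2 > 0 := by
  have hs2 : s / 2 > 0 := by linarith
  have key : ∀ x : ℝ, x > s / 2 → s - r * t / x > s / 2 := by
    intro x hx
    have hx0 : 0 < x := lt_trans hs2 hx
    have h1 : r * t / x < r * t / (s / 2) := by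
      apply div_lt_div_of_pos_left (by positivity) hs2 hx
    have h2 : r * t / (s / 2) ≤ s / 2 := by
      rw [div_le_iff₀ hs2]; nlinarith
    linarith
  intro i hi
  refine ⟨?_, hs2⟩
  induction i, hi using Nat.le_induction with
  | base =>
    have := hkrec 1 le_rfl
    rw [hk1] at this
    rw [show (2:ℕ) = 1 + 1 from rfl, this]
    exact key s (by linarith)
  | succ n hn ih =>
    rw [hkrec n (by omega)]
    exact key _ ih
end

section
/- Let a, b, r, s, t be non-negative real numbers with as ≥ br and s² ≥ rt. Let J be the infinite tridiagonal matrix with J(0,0) = a, J(1,0) = b, J(i,i) = s for i ≥ 1, J(i,i+1) = r for i ≥ 0, J(i+1,i) = t for i ≥ 1, and all other entries zero. Then every 2×2 minor of J is non-negative, i.e., for all i₁ < i₂ and j₁ < j₂, J(i₁,j₁)J(i₂,j₂) − J(i₁,j₂)J(i₂,j₁) ≥ 0. -/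
theorem stmt_3 (a b r s t : ℝ) (ha : 0 ≤ a) (hb : 0 ≤ b) (hr : 0 ≤ r)
    (hs : 0 ≤ s) (ht : 0 ≤ t) (h1 : a * s ≥ b * r) (h2 : s ^ 2 ≥ r * t)
    (J : ℕ → ℕ → ℝ)
    (hJ : ∀ i j, J i j =
      if i = 0 ∧ j = 0 then a
      else if i = 1 ∧ j = 0 then b
      else if i = j ∧ 1 ≤ i then s
      else if j = i + 1 then r
      else if i = j + 1 ∧ 1 ≤ j then t
      else 0) :
    ∀ i₁ i₂ j₁ j₂ : ℕ, i₁ < i₂ → j₁ < j₂ →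
      J i₁ j₁ * J i₂ j₂ - J i₁ j₂ * J i₂ j₁ ≥ 0 := by
  have hnn : ∀ i j, 0 ≤ J i j := by
    intro i j; rw [hJ]; split_ifs <;> first | assumption | exact le_refl 0
  have hz : ∀ i j : ℕ, (j + 1 < i ∨ i + 1 < j) → J i j = 0 := by
    intro i j h; rw [hJ]; split_ifs <;> first | rfl | (exfalso; omega) | tauto
  intro i₁ i₂ j₁ j₂ hi hj
  by_cases hc : i₂ = i₁ + 1 ∧ j₂ = j₁ + 1 ∧ j₁ = i₁
  · obtain ⟨e1, e2, e3⟩ := hc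
    subst e1; subst e2; subst e3
    rcases Nat.eq_zero_or_pos j₁ with h0 | h0
    · subst h0
      have v1 : J 0 0 = a := by rw [hJ]; norm_num
      have v2 : J 1 1 = s := by rw [hJ]; norm_num
      have v3 : J 0 1 = r := by rw [hJ]; norm_num
      have v4 : J 1 0 = b := by rw [hJ]; norm_num
      rw [v1, v2, v3, v4]; nlinarith
    · have v1 : J j₁ j₁ = s := by rw [hJ]; split_ifs <;> first | rfl | (exfalso; omega) | tauto
      have v2 : J (j₁+1) (j₁+1) = s := by rw [hJ]; split_ifs <;> first | rfl | (exfalso; omega) | tauto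
      have v3 : J j₁ (j₁+1) = r := by rw [hJ]; split_ifs <;> first | rfl | (exfalso; omega) | tauto
      have v4 : J (j₁+1) j₁ = t := by rw [hJ]; split_ifs <;> first | rfl | (exfalso; omega) | tauto
      rw [v1, v2, v3, v4]; nlinarith
  · have hzero : J i₁ j₂ = 0 ∨ J i₂ j₁ = 0 := by
      rcases Nat.lt_or_ge (i₁ + 1) j₂ with h | h
      · exact Or.inl (hz _ _ (Or.inr h))
      · rcases Nat.lt_or_ge (j₁ + 1) i₂ with h' | h'
        · exact Or.inr (hz _ _ (Or.inl h'))
        · exfalso; exact hc ⟨by omega, by omega, by omega⟩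
    rcases hzero with h | h <;> rw [h] <;>
      nlinarith [mul_nonneg (hnn i₁ j₁) (hnn i₂ j₂)]
end

section
/- Let a, b, r, s, t ≥ 0 with r > 0, s > 0, t > 0, a > 0, s² ≥ 4rt, and a(s + √(s²−4rt))/2 ≥ br. Define k_0 = a, k_1 = s − br/a, k_{i+1} = s − rt/k_i for i ≥ 1, and l_0 = b/a, l_i = t/k_i for i ≥ 1. Then the tridiagonal matrix J with J(0,0) = a, J(1,0) = b, J(i,i) = s for i ≥ 1, J(i,i+1) = r, J(i+1,i) = t for i ≥ 1 satisfies: J(i,i) = k_i + l_{i-1}·r for i ≥ 1 (interpreting appropriately), J(i+1,i) = l_i · k_i, J(i,i+1) = r, J(0,0) = k_0; that is, J equals the product L·U where L is lower bidiagonal with diagonal 1 and subdiagonal entries l_i, and U is upper bidiagonal with diagonal entries k_i and superdiagonal entries r. -/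
theorem stmt_4 (a b r s t : ℝ) (ha : 0 < a) (hb : 0 ≤ b) (hr : 0 < r)
    (hs : 0 < s) (ht : 0 < t) (hst : s ^ 2 ≥ 4 * r * t)
    (hab : a * (s + Real.sqrt (s ^ 2 - 4 * r * t)) / 2 ≥ b * r)
    (k l : ℕ → ℝ)
    (hk0 : k 0 = a) (hk1 : k 1 = s - b * r / a)
    (hkrec : ∀ i, 1 ≤ i → k (i + 1) = s - r * t / k i)
    (hl0 : l 0 = b / a) (hli : ∀ i, 1 ≤ i → l i = t / k i) :
    ∀ i j : ℕ,
      (if i = 0 ∧ j = 0 then a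
       else if i = 1 ∧ j = 0 then b
       else if i = j ∧ 1 ≤ i then s
       else if j = i + 1 then r
       else if i = j + 1 ∧ 1 ≤ j then t
       else 0)
      = ∑ x ∈ Finset.range (i + 1),
          (if x = i then (1 : ℝ) else if i = x + 1 then l x else 0) *
          (if x = j then k x else if j = x + 1 then r else 0) := by
  have hd2 : Real.sqrt (s ^ 2 - 4 * r * t) ^ 2 = s ^ 2 - 4 * r * t :=
    Real.sq_sqrt (by linarith)
  set d := Real.sqrt (s ^ 2 - 4 * r * t) with hd
  have hd0 : 0 ≤ d := Real.sqrt_nonneg _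
  have hds : d < s := by nlinarith [mul_pos hr ht]
  have hkey : ∀ i, 1 ≤ i → (s - d) / 2 ≤ k i := by
    intro i hi
    induction i with
    | zero => omega
    | succ n ih =>
      rcases Nat.lt_or_ge n 1 with h | hn
      · have hn0 : n = 0 := by omega
        subst hn0
        rw [hk1]
        have hba : b * r / a ≤ (s + d) / 2 := by
          rw [div_le_iff₀ ha]
          nlinarith [hab]
        linarith
      · have ihn := ih hn
        have hknpos : 0 < k n := lt_of_lt_of_le (by linarith) ihn
        rw [hkrec n hn]
        have h1 : r * t / k n ≤ (s + d) / 2 := by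
          rw [div_le_iff₀ hknpos]
          nlinarith [mul_le_mul_of_nonneg_left ihn (by linarith : (0:ℝ) ≤ (s + d) / 2)]
        linarith
  have hkpos : ∀ i, 1 ≤ i → 0 < k i := fun i hi =>
    lt_of_lt_of_le (by linarith) (hkey i hi)
  intro i j
  match i with
  | 0 =>
    rw [Finset.sum_range_one]
    by_cases hj0 : j = 0
    · subst hj0; simp [hk0]
    · by_cases hj1 : j = 1
      · subst hj1; simp
      · simp [hj0, hj1, show ¬ (0 = j) from by omega]
  | Nat.succ m =>
    have hzero : ∑ x ∈ Finset.range m,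
        (if x = m + 1 then (1 : ℝ) else if m + 1 = x + 1 then l x else 0) *
        (if x = j then k x else if j = x + 1 then r else 0) = 0 := by
      apply Finset.sum_eq_zero
      intro x hx
      have hxm : x < m := Finset.mem_range.mp hx
      rw [if_neg (by omega), if_neg (by omega), zero_mul]
    rw [Finset.sum_range_succ, Finset.sum_range_succ, hzero, zero_add]
    by_cases hjm : j = m
    · rcases Nat.eq_zero_or_pos m with hm | hm
      · subst hm; subst hjm
        norm_num [hl0, hk0]
        field_simp
      · have hkm := hkpos m hm
        simp [hjm, hli m hm, show ¬ (m = m + 1) from by omega,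
          show ¬ (m + 1 = m) from by omega, show ¬ (m = m + 2) from by omega,
          show ¬ (m + 1 = 1) from by omega, hm,
          div_mul_cancel₀ t (ne_of_gt hkm)]
        rw [if_neg (by omega), if_pos (by omega)]
    · by_cases hjm1 : j = m + 1
      · subst hjm1
        rcases Nat.eq_zero_or_pos m with hm | hm
        · subst hm
          norm_num [hl0, hk1]
          field_simp
          ring
        · have hkm := hkpos m hm
          simp [hli m hm, hkrec m hm, show ¬ (m = m + 1) from by omega,
            show ¬ (m + 1 = m + 2) from by omega, show ¬ (m + 1 = 1) from by omega]
          field_simp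
          ring
      · by_cases hjm2 : j = m + 2
        · subst hjm2
          simp [show ¬ (m = m + 1) from by omega, show ¬ (m = m + 2) from by omega,
            show ¬ (m + 1 = m + 2) from by omega, show ¬ (m + 2 = m + 1) from by omega,
            show ¬ (m + 1 = m + 3) from by omega]
        · simp [show ¬ (m = m + 1) from by omega, show ¬ (m = j) from by omega,
            show ¬ (j = m + 1) from hjm1, show ¬ (m + 1 = j) from by omega,
            show ¬ (j = m + 2) from hjm2, show ¬ (m + 1 = j + 1) from by omega,
            show ¬ (m + 1 = 1 ∧ j = 0) from by omega]
          intro h1 h2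
          omega
end

section
/- An n×n upper bidiagonal matrix (nonzero entries only on the main diagonal and the superdiagonal) is totally positive if and only if all its entries are non-negative. -/
def TotallyPos {n : ℕ} (M : Matrix (Fin n) (Fin n) ℝ) : Prop :=
  ∀ (k : ℕ) (row col : Fin k → Fin n), StrictMono row → StrictMono col →
    0 ≤ (M.submatrix row col).det

theorem stmt_5 (n : ℕ) (M : Matrix (Fin n) (Fin n) ℝ)
    (hbidiag : ∀ i j : Fin n, (j : ℕ) ≠ i → (j : ℕ) ≠ (i : ℕ) + 1 → M i j = 0) :
    TotallyPos M ↔ ∀ i j : Fin n, 0 ≤ M i j := by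
  constructor
  · intro h i j
    have h1 := h 1 (fun _ => i) (fun _ => j)
      (fun a b hab => absurd (Subsingleton.elim a b) hab.ne)
      (fun a b hab => absurd (Subsingleton.elim a b) hab.ne)
    simpa [Matrix.det_fin_one] using h1
  · intro h k row col hrow hcol
    rw [Matrix.det_apply']
    apply Finset.sum_nonneg
    intro σ _
    by_cases hσ : σ = 1
    · subst hσ
      simp only [Equiv.Perm.sign_one, Units.val_one, Int.cast_one, one_mul,
        Equiv.Perm.coe_one, id_eq, Matrix.submatrix_apply]
      exact Finset.prod_nonneg fun i _ => h _ _
    · -- show some factor is zero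
      have hz : ∃ a : Fin k, (M.submatrix row col) (σ a) a = 0 := by
        by_contra hne
        push_neg at hne
        -- each nonzero entry gives col a ∈ {row (σ a), row (σ a)+1}
        have key : ∀ a : Fin k, ((col a : ℕ) = (row (σ a) : ℕ)) ∨
            ((col a : ℕ) = (row (σ a) : ℕ) + 1) := by
          intro a
          by_contra hc
          push_neg at hc
          exact hne a (hbidiag _ _ hc.1 hc.2)
        have hmono : StrictMono fun a => σ a := by
          intro a b hab
          by_contra hle
          have hba : σ b < σ a := lt_of_le_of_ne (not_lt.mp hle)
            (fun e => (σ.injective e ▸ hab).ne rfl)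
          have h1 : (col a : ℕ) ≥ (row (σ a) : ℕ) := by
            rcases key a with h' | h' <;> omega
          have h2 : (col b : ℕ) ≤ (row (σ b) : ℕ) + 1 := by
            rcases key b with h' | h' <;> omega
          have h3 : (row (σ b) : ℕ) < (row (σ a) : ℕ) := hrow hba
          have h4 : (col a : ℕ) < (col b : ℕ) := hcol hab
          omega
        have : (fun a => σ a) = id := by
          have inst : WellFoundedLT (Fin k) := inferInstance
          have hri := @StrictMono.range_inj (Fin k) (Fin k) _ _ inst
            (fun a => σ a) id hmono strictMono_id
          exact hri.1 ((Set.range_eq_univ.2 σ.surjective).trans Set.range_id.symm)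
        exact hσ (Equiv.ext fun a => congrFun this a)
      obtain ⟨a, ha⟩ := hz
      rw [Finset.prod_eq_zero (f := fun i => M.submatrix row col (σ i) i) (Finset.mem_univ a) ha]
      simp
end

section
/- An n×n lower bidiagonal matrix (nonzero entries only on the main diagonal and the subdiagonal) with non-negative entries is totally positive. -/
lemma perm_eq_one_of_strictMono {k : ℕ} (σ : Equiv.Perm (Fin k)) (h : StrictMono σ) : σ = 1 := by
  haveI : WellFoundedLT (Fin k) := inferInstance
  have : (σ : Fin k → Fin k) = (id : Fin k → Fin k) :=
    (StrictMono.range_inj h strictMono_id).mp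
      (by simp [Set.range_id, σ.surjective.range_eq])
  ext i
  exact congrArg Fin.val (congrFun this i)

theorem stmt_6 (n : ℕ) (M : Matrix (Fin n) (Fin n) ℝ)
    (hbidiag : ∀ i j : Fin n, (i : ℕ) ≠ j → (i : ℕ) ≠ (j : ℕ) + 1 → M i j = 0)
    (hnonneg : ∀ i j : Fin n, 0 ≤ M i j) :
    TotallyPos M := by
  intro k row col hrow hcol
  set A := M.submatrix row col with hA
  -- staircase property
  have key : ∀ a a' b b' : Fin k, a < a' → b' < b → A a b ≠ 0 → A a' b' = 0 := by
    intro a a' b b' haa hbb hne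
    by_contra hne'
    have h1 : (row a : ℕ) = col b ∨ (row a : ℕ) = (col b : ℕ) + 1 := by
      by_contra hc
      push_neg at hc
      exact hne (hbidiag _ _ hc.1 hc.2)
    have h2 : (row a' : ℕ) = col b' ∨ (row a' : ℕ) = (col b' : ℕ) + 1 := by
      by_contra hc
      push_neg at hc
      exact hne' (hbidiag _ _ hc.1 hc.2)
    have hr : (row a : ℕ) < row a' := hrow haa
    have hc : (col b' : ℕ) < col b := hcol hbb
    omega
  rw [Matrix.det_apply]
  rw [Finset.sum_eq_single (1 : Equiv.Perm (Fin k))]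
  · simp only [Equiv.Perm.sign_one, one_smul, Equiv.Perm.one_apply]
    exact Finset.prod_nonneg fun i _ => hnonneg _ _
  · intro σ _ hσ
    have : ∏ i, A (σ i) i = 0 := by
      -- σ is not strictly monotone, so it has an inversion
      have hns : ¬ StrictMono (σ : Fin k → Fin k) := fun hs => hσ (perm_eq_one_of_strictMono σ hs)
      simp only [StrictMono, not_forall] at hns
      obtain ⟨i, i', hii, hsi⟩ := hns
      have hsi' : σ i' < σ i := by
        rcases lt_trichotomy (σ i) (σ i') with h | h | h
        · exact absurd h hsi
        · exact absurd (σ.injective h) (ne_of_lt hii)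
        · exact h
      by_cases h0 : A (σ i') i' = 0
      · exact Finset.prod_eq_zero (Finset.mem_univ i') h0
      · exact Finset.prod_eq_zero (Finset.mem_univ i) (key _ _ _ _ hsi' hii h0)
    rw [this, smul_zero]
  · intro h; exact absurd (Finset.mem_univ _) h
end

section
/- If a sequence (a_n) of non-negative reals is log-concave (a_i² ≥ a_{i−1}a_{i+1} for all i ≥ 1) with no internal zeros, then its lower-triangular Toeplitz matrix T(i,j) = a_{i−j} (0 for i < j) restricted to any finite Fin n is TP₂, i.e., all 2×2 minors are non-negative. -/
private lemma lc_step (a : ℕ → ℝ)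
    (hlc : ∀ i, 1 ≤ i → a (i - 1) * a (i + 1) ≤ a i ^ 2) :
    ∀ k p : ℕ, (∀ j, p ≤ j → j ≤ p + k + 1 → 0 < a j) →
      a p * a (p + k + 1) ≤ a (p + 1) * a (p + k) := by
  intro k
  induction k with
  | zero => intro p _; simp [mul_comm]
  | succ k IH =>
    intro p hpos
    have h1 : a p * a (p + k + 1) ≤ a (p + 1) * a (p + k) := by
      apply IH p
      intro j hj1 hj2
      exact hpos j hj1 (by omega)
    have h2 : a (p + k) * a (p + k + 2) ≤ a (p + k + 1) ^ 2 := by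
      have := hlc (p + k + 1) (by omega)
      simpa using this
    have hm : 0 < a (p + k + 1) := hpos _ (by omega) (by omega)
    have hp1 : 0 < a (p + 1) := hpos _ (by omega) (by omega)
    have hend : 0 < a (p + k + 2) := hpos _ (by omega) (by omega)
    have hstart : 0 < a p := hpos _ (by omega) (by omega)
    have e : p + (k + 1) + 1 = p + k + 2 := by omega
    have e' : p + (k + 1) = p + k + 1 := by omega
    rw [e, e']
    nlinarith [mul_le_mul_of_nonneg_right h1 hend.le,
      mul_le_mul_of_nonneg_left h2 hp1.le]

private lemma lc_inward_pos (a : ℕ → ℝ)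
    (hlc : ∀ i, 1 ≤ i → a (i - 1) * a (i + 1) ≤ a i ^ 2) :
    ∀ s t p : ℕ, (∀ j, p ≤ j → j ≤ p + 2 * s + t → 0 < a j) →
      a p * a (p + 2 * s + t) ≤ a (p + s) * a (p + s + t) := by
  intro s
  induction s with
  | zero => intro t p _; simp
  | succ s IH =>
    intro t p hpos
    have h1 : a p * a (p + (2 * s + t + 1) + 1) ≤ a (p + 1) * a (p + (2 * s + t + 1)) := by
      apply lc_step a hlc
      intro j hj1 hj2
      exact hpos j hj1 (by omega)
    have h2 : a (p + 1) * a ((p + 1) + 2 * s + t) ≤ a ((p + 1) + s) * a ((p + 1) + s + t) := by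
      apply IH
      intro j hj1 hj2
      exact hpos j (by omega) (by omega)
    have e1 : p + 2 * (s + 1) + t = p + (2 * s + t + 1) + 1 := by omega
    have e2 : p + (2 * s + t + 1) = (p + 1) + 2 * s + t := by omega
    have e3 : (p + 1) + s = p + (s + 1) := by omega
    have e4 : (p + 1) + s + t = p + (s + 1) + t := by omega
    rw [e1]
    calc a p * a (p + (2 * s + t + 1) + 1)
        ≤ a (p + 1) * a (p + (2 * s + t + 1)) := h1
      _ = a (p + 1) * a ((p + 1) + 2 * s + t) := by rw [e2]
      _ ≤ a ((p + 1) + s) * a ((p + 1) + s + t) := h2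
      _ = a (p + (s + 1)) * a (p + (s + 1) + t) := by rw [e3]

private lemma lc_inward (a : ℕ → ℝ) (ha : ∀ i, 0 ≤ a i)
    (hlc : ∀ i, 1 ≤ i → a (i - 1) * a (i + 1) ≤ a i ^ 2)
    (hniz : ∀ i j k : ℕ, i < j → j < k → 0 < a i → 0 < a k → 0 < a j)
    (s t p : ℕ) : a p * a (p + 2 * s + t) ≤ a (p + s) * a (p + s + t) := by
  rcases eq_or_lt_of_le (ha p) with h0 | hp0
  · rw [← h0]; simpa using mul_nonneg (ha _) (ha _)
  rcases eq_or_lt_of_le (ha (p + 2 * s + t)) with h0 | hq0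
  · rw [← h0]; simpa using mul_nonneg (ha _) (ha _)
  apply lc_inward_pos a hlc
  intro j hj1 hj2
  rcases eq_or_lt_of_le hj1 with rfl | hj1'
  · exact hp0
  rcases eq_or_lt_of_le hj2 with h | hj2'
  · rw [h]; exact hq0
  exact hniz p j (p + 2 * s + t) hj1' hj2' hp0 hq0

theorem stmt_11 (n : ℕ) (a : ℕ → ℝ) (ha : ∀ i, 0 ≤ a i)
    (hlc : ∀ i, 1 ≤ i → a (i - 1) * a (i + 1) ≤ a i ^ 2)
    (hniz : ∀ i j k : ℕ, i < j → j < k → 0 < a i → 0 < a k → 0 < a j)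
    (T : Matrix (Fin n) (Fin n) ℝ)
    (hT : ∀ i j : Fin n, T i j = if (j : ℕ) ≤ (i : ℕ) then a ((i : ℕ) - j) else 0) :
    ∀ i₁ i₂ j₁ j₂ : Fin n, i₁ < i₂ → j₁ < j₂ →
      0 ≤ T i₁ j₁ * T i₂ j₂ - T i₁ j₂ * T i₂ j₁ := by
  intro i₁ i₂ j₁ j₂ hi hj
  have hTnn : ∀ i j : Fin n, 0 ≤ T i j := by
    intro i j
    rw [hT]
    split
    · exact ha _
    · exact le_refl 0
  have hi' : (i₁ : ℕ) < (i₂ : ℕ) := hi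
  have hj' : (j₁ : ℕ) < (j₂ : ℕ) := hj
  by_cases hc : (j₂ : ℕ) ≤ (i₁ : ℕ)
  · -- all four entries in the support
    have h11 : T i₁ j₁ = a ((i₁ : ℕ) - j₁) := by rw [hT]; rw [if_pos (by omega)]
    have h22 : T i₂ j₂ = a ((i₂ : ℕ) - j₂) := by rw [hT]; rw [if_pos (by omega)]
    have h12 : T i₁ j₂ = a ((i₁ : ℕ) - j₂) := by rw [hT]; rw [if_pos (by omega)]
    have h21 : T i₂ j₁ = a ((i₂ : ℕ) - j₁) := by rw [hT]; rw [if_pos (by omega)]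
    rw [h11, h22, h12, h21]
    set p : ℕ := (i₁ : ℕ) - j₂ with hp
    have hd1 : (i₁ : ℕ) - j₁ = p + ((j₂ : ℕ) - j₁) := by omega
    have hd2 : (i₂ : ℕ) - j₂ = p + ((i₂ : ℕ) - i₁) := by omega
    have hd3 : (i₂ : ℕ) - j₁ = p + ((j₂ : ℕ) - j₁) + ((i₂ : ℕ) - i₁) := by omega
    set d1 : ℕ := (j₂ : ℕ) - j₁
    set d2 : ℕ := (i₂ : ℕ) - i₁
    rw [hd1, hd2, hd3]
    rcases le_total d1 d2 with hd | hd
    · have e : p + d1 + d2 = p + 2 * d1 + (d2 - d1) := by omega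
      have := lc_inward a ha hlc hniz d1 (d2 - d1) p
      have e2 : p + d1 + (d2 - d1) = p + d2 := by omega
      rw [e2] at this
      rw [e]
      linarith
    · have e : p + d1 + d2 = p + 2 * d2 + (d1 - d2) := by omega
      have := lc_inward a ha hlc hniz d2 (d1 - d2) p
      have e2 : p + d2 + (d1 - d2) = p + d1 := by omega
      rw [e2] at this
      rw [e]
      nlinarith [this]
  · -- T i₁ j₂ = 0
    have h12 : T i₁ j₂ = 0 := by rw [hT]; rw [if_neg hc]
    rw [h12]
    have := mul_nonneg (hTnn i₁ j₁) (hTnn i₂ j₂)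
    linarith
end

section
/- Let R = (r_{n,k}) be an infinite lower-triangular matrix satisfying r_{0,0} = 1, r_{n+1,0} = a·r_{n,0} + b·r_{n,1}, and r_{n+1,k+1} = r·r_{n,k} + s·r_{n,k+1} + t·r_{n,k+2}, with a, b, r, s, t ≥ 0, as ≥ br, and s² ≥ rt. Then the first column (r_{n,0}) is log-convex: r_{n,0}² ≤ r_{n−1,0}·r_{n+1,0} for all n ≥ 1. -/
private lemma colL1 (a b rr s t : ℝ) (ha : 0 ≤ a) (hb : 0 ≤ b) (ht : 0 ≤ t)
    (h1 : b * rr ≤ a * s)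
    {u0 u1 u2 u3 v0 v1 v2 w0 w1 : ℝ}
    (hv0 : v0 = a * u0 + b * u1)
    (hv1 : v1 = rr * u0 + s * u1 + t * u2)
    (hv2 : v2 = rr * u1 + s * u2 + t * u3)
    (hw0 : w0 = a * v0 + b * v1)
    (hw1 : w1 = rr * v0 + s * v1 + t * v2)
    (m01 : u1 * v0 ≤ u0 * v1)
    (m02 : u2 * v0 ≤ u0 * v2)
    (m12 : u2 * v1 ≤ u1 * v2) :
    v1 * w0 ≤ v0 * w1 := by
  subst hw0 hw1 hv0 hv1 hv2
  nlinarith [mul_nonneg (sub_nonneg.mpr h1) (sub_nonneg.mpr m01),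
    mul_nonneg (mul_nonneg ha ht) (sub_nonneg.mpr m02),
    mul_nonneg (mul_nonneg hb ht) (sub_nonneg.mpr m12)]

private lemma colL2 (a b rr s t : ℝ) (ha : 0 ≤ a) (hb : 0 ≤ b) (hrr : 0 ≤ rr)
    (hs : 0 ≤ s) (ht : 0 ≤ t)
    {u0 u1 u2 c0 c1 c2 c3 c4 v0 v1 d1 d2 d3 w0 wk : ℝ}
    (hv0 : v0 = a * u0 + b * u1)
    (hv1 : v1 = rr * u0 + s * u1 + t * u2)
    (hd1 : d1 = rr * c0 + s * c1 + t * c2)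
    (hd2 : d2 = rr * c1 + s * c2 + t * c3)
    (hd3 : d3 = rr * c2 + s * c3 + t * c4)
    (hw0 : w0 = a * v0 + b * v1)
    (hwk : wk = rr * d1 + s * d2 + t * d3)
    (m01 : c1 * v0 ≤ u0 * d1)
    (m02 : c2 * v0 ≤ u0 * d2)
    (m03 : c3 * v0 ≤ u0 * d3)
    (m11 : c1 * v1 ≤ u1 * d1)
    (m12 : c2 * v1 ≤ u1 * d2)
    (m13 : c3 * v1 ≤ u1 * d3) :
    d2 * w0 ≤ v0 * wk := by
  subst hw0 hwk hv0 hv1 hd1 hd2 hd3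
  nlinarith [mul_nonneg (mul_nonneg ha hrr) (sub_nonneg.mpr m01),
    mul_nonneg (mul_nonneg ha hs) (sub_nonneg.mpr m02),
    mul_nonneg (mul_nonneg ha ht) (sub_nonneg.mpr m03),
    mul_nonneg (mul_nonneg hb hrr) (sub_nonneg.mpr m11),
    mul_nonneg (mul_nonneg hb hs) (sub_nonneg.mpr m12),
    mul_nonneg (mul_nonneg hb ht) (sub_nonneg.mpr m13)]

private lemma colL3 (rr s t : ℝ) (hrr : 0 ≤ rr) (hs : 0 ≤ s) (ht : 0 ≤ t)
    (h2 : rr * t ≤ s ^ 2)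
    {u0 u1 u2 u3 v0 v1 v2 v3 w1 w2 : ℝ}
    (hv1 : v1 = rr * u0 + s * u1 + t * u2)
    (hv2 : v2 = rr * u1 + s * u2 + t * u3)
    (hw1 : w1 = rr * v0 + s * v1 + t * v2)
    (hw2 : w2 = rr * v1 + s * v2 + t * v3)
    (m01 : u1 * v0 ≤ u0 * v1)
    (m02 : u2 * v0 ≤ u0 * v2)
    (m03 : u3 * v0 ≤ u0 * v3)
    (m12 : u2 * v1 ≤ u1 * v2)
    (m13 : u3 * v1 ≤ u1 * v3)
    (m23 : u3 * v2 ≤ u2 * v3) :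
    v2 * w1 ≤ v1 * w2 := by
  subst hw1 hw2 hv1 hv2
  nlinarith [mul_nonneg (mul_nonneg hrr hrr) (sub_nonneg.mpr m01),
    mul_nonneg (mul_nonneg hrr hs) (sub_nonneg.mpr m02),
    mul_nonneg (mul_nonneg hrr ht) (sub_nonneg.mpr m03),
    mul_nonneg (sub_nonneg.mpr h2) (sub_nonneg.mpr m12),
    mul_nonneg (mul_nonneg hs ht) (sub_nonneg.mpr m13),
    mul_nonneg (mul_nonneg ht ht) (sub_nonneg.mpr m23)]

private lemma colL4 (rr s t : ℝ) (hrr : 0 ≤ rr) (hs : 0 ≤ s) (ht : 0 ≤ t)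
    {p0 p1 p2 p3 q0 q1 q2 q3 q4 vj0 vj1 vj2 vk1 vk2 vk3 wj wk : ℝ}
    (hvj1 : vj1 = rr * p0 + s * p1 + t * p2)
    (hvj2 : vj2 = rr * p1 + s * p2 + t * p3)
    (hvk1 : vk1 = rr * q0 + s * q1 + t * q2)
    (hvk2 : vk2 = rr * q1 + s * q2 + t * q3)
    (hvk3 : vk3 = rr * q2 + s * q3 + t * q4)
    (hwj : wj = rr * vj0 + s * vj1 + t * vj2)
    (hwk : wk = rr * vk1 + s * vk2 + t * vk3)
    (m01 : q1 * vj0 ≤ p0 * vk1)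
    (m02 : q2 * vj0 ≤ p0 * vk2)
    (m03 : q3 * vj0 ≤ p0 * vk3)
    (m11 : q1 * vj1 ≤ p1 * vk1)
    (m12 : q2 * vj1 ≤ p1 * vk2)
    (m13 : q3 * vj1 ≤ p1 * vk3)
    (m21 : q1 * vj2 ≤ p2 * vk1)
    (m22 : q2 * vj2 ≤ p2 * vk2)
    (m23 : q3 * vj2 ≤ p2 * vk3) :
    vk2 * wj ≤ vj1 * wk := by
  subst hwj hwk hvj1 hvj2 hvk1 hvk2 hvk3
  nlinarith [mul_nonneg (mul_nonneg hrr hrr) (sub_nonneg.mpr m01),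
    mul_nonneg (mul_nonneg hrr hs) (sub_nonneg.mpr m02),
    mul_nonneg (mul_nonneg hrr ht) (sub_nonneg.mpr m03),
    mul_nonneg (mul_nonneg hs hrr) (sub_nonneg.mpr m11),
    mul_nonneg (mul_nonneg hs hs) (sub_nonneg.mpr m12),
    mul_nonneg (mul_nonneg hs ht) (sub_nonneg.mpr m13),
    mul_nonneg (mul_nonneg ht hrr) (sub_nonneg.mpr m21),
    mul_nonneg (mul_nonneg ht hs) (sub_nonneg.mpr m22),
    mul_nonneg (mul_nonneg ht ht) (sub_nonneg.mpr m23)]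

theorem stmt_12 (a b rr s t : ℝ) (ha : 0 ≤ a) (hb : 0 ≤ b) (hrr : 0 ≤ rr)
    (hs : 0 ≤ s) (ht : 0 ≤ t) (h1 : a * s ≥ b * rr) (h2 : s ^ 2 ≥ rr * t)
    (r : ℕ → ℕ → ℝ)
    (h00 : r 0 0 = 1)
    (htri : ∀ n k : ℕ, n < k → r n k = 0)
    (hrec0 : ∀ n : ℕ, r (n + 1) 0 = a * r n 0 + b * r n 1)
    (hrec : ∀ n k : ℕ, r (n + 1) (k + 1)
      = rr * r n k + s * r n (k + 1) + t * r n (k + 2)) :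
    ∀ n : ℕ, 1 ≤ n → (r n 0) ^ 2 ≤ r (n - 1) 0 * r (n + 1) 0 := by
  have hnn : ∀ n k, 0 ≤ r n k := by
    intro n
    induction n with
    | zero =>
      intro k
      match k with
      | 0 => rw [h00]; norm_num
      | k + 1 => rw [htri 0 (k + 1) (by omega)]
    | succ n ih =>
      intro k
      match k with
      | 0 =>
        rw [hrec0 n]
        exact add_nonneg (mul_nonneg ha (ih 0)) (mul_nonneg hb (ih 1))
      | k + 1 =>
        rw [hrec n k]
        exact add_nonneg (add_nonneg (mul_nonneg hrr (ih k))
          (mul_nonneg hs (ih (k + 1)))) (mul_nonneg ht (ih (k + 2)))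
  have key : ∀ n, ∀ j k : ℕ, j ≤ k → r n k * r (n + 1) j ≤ r n j * r (n + 1) k := by
    intro n
    induction n with
    | zero =>
      intro j k hjk
      rcases Nat.eq_or_lt_of_le hjk with rfl | hlt
      · exact le_rfl
      · rw [htri 0 k (by omega), zero_mul]
        exact mul_nonneg (hnn 0 j) (hnn 1 k)
    | succ n ih =>
      intro j k hjk
      rcases Nat.eq_or_lt_of_le hjk with rfl | hlt
      · exact le_rfl
      rcases j with _ | i
      · rcases k with _ | _ | e
        · omega
        · exact colL1 a b rr s t ha hb ht h1
            (hrec0 n) (hrec n 0) (hrec n 1) (hrec0 (n + 1)) (hrec (n + 1) 0)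
            (ih 0 1 (by omega)) (ih 0 2 (by omega)) (ih 1 2 (by omega))
        · exact colL2 a b rr s t ha hb hrr hs ht
            (hrec0 n) (hrec n 0) (hrec n e) (hrec n (e + 1)) (hrec n (e + 2))
            (hrec0 (n + 1)) (hrec (n + 1) (e + 1))
            (ih 0 (e + 1) (by omega)) (ih 0 (e + 2) (by omega)) (ih 0 (e + 3) (by omega))
            (ih 1 (e + 1) (by omega)) (ih 1 (e + 2) (by omega)) (ih 1 (e + 3) (by omega))
      · by_cases hk : k = i + 2
        · subst hk
          exact colL3 rr s t hrr hs ht h2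
            (hrec n i) (hrec n (i + 1)) (hrec (n + 1) i) (hrec (n + 1) (i + 1))
            (ih i (i + 1) (by omega)) (ih i (i + 2) (by omega)) (ih i (i + 3) (by omega))
            (ih (i + 1) (i + 2) (by omega)) (ih (i + 1) (i + 3) (by omega))
            (ih (i + 2) (i + 3) (by omega))
        · obtain ⟨f, rfl, hif⟩ : ∃ f, k = f + 2 ∧ i + 1 ≤ f := ⟨k - 2, by omega, by omega⟩
          exact colL4 rr s t hrr hs ht
            (hrec n i) (hrec n (i + 1)) (hrec n f) (hrec n (f + 1)) (hrec n (f + 2))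
            (hrec (n + 1) i) (hrec (n + 1) (f + 1))
            (ih i (f + 1) (by omega)) (ih i (f + 2) (by omega)) (ih i (f + 3) (by omega))
            (ih (i + 1) (f + 1) (by omega)) (ih (i + 1) (f + 2) (by omega))
            (ih (i + 1) (f + 3) (by omega))
            (ih (i + 2) (f + 1) (by omega)) (ih (i + 2) (f + 2) (by omega))
            (ih (i + 2) (f + 3) (by omega))
  intro n hn
  obtain ⟨m, rfl⟩ : ∃ m, n = m + 1 := ⟨n - 1, by omega⟩
  have hm : m + 1 - 1 = m := rfl
  rw [hm, hrec0 (m + 1), hrec0 m]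
  have hkey := key m 0 1 (by omega)
  rw [hrec0 m] at hkey
  nlinarith [mul_nonneg hb (sub_nonneg.mpr hkey), hnn m 0, hnn m 1]
end

section
/- For the Riordan-type array R with entries r_{n,k} = C(2n−k, n) (binomial coefficient), all 2×2 minors with consecutive rows are non-negative: r_{n,j₁}·r_{n+1,j₂} − r_{n,j₂}·r_{n+1,j₁} ≥ 0 whenever j₁ < j₂ ≤ n. -/
lemma id1 (n d a b : ℕ) (ha : a = n + d) (hb : b = a + 1) :
    b * Nat.choose a n = (d + 1) * Nat.choose b n := by
  subst ha; subst hb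
  have h := Nat.add_one_mul_choose_eq (n + d) d
  rw [Nat.choose_symm_of_eq_add (show n + d = d + n by omega)] at h
  rw [Nat.choose_symm_of_eq_add (show n + d + 1 = (d + 1) + n by omega)] at h
  rw [h]; ring

lemma consec (n d a : ℕ) (hd : d < n) (ha : a = n + d) :
    Nat.choose a n * Nat.choose (a + 3) (n + 1) ≤
      Nat.choose (a + 1) n * Nat.choose (a + 2) (n + 1) := by
  set A := Nat.choose a n
  set B := Nat.choose (a + 1) n
  set P := Nat.choose (a + 2) (n + 1)
  set Q := Nat.choose (a + 3) (n + 1)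
  have e1 : (a + 1) * A = (d + 1) * B := id1 n d a (a + 1) ha rfl
  have e2 : (a + 3) * P = (d + 2) * Q :=
    id1 (n + 1) (d + 1) (a + 2) (a + 3) (by omega) rfl
  have key : A * Q * ((a + 1) * (d + 2)) = B * P * ((d + 1) * (a + 3)) := by
    calc A * Q * ((a + 1) * (d + 2)) = ((a + 1) * A) * ((d + 2) * Q) := by ring
    _ = ((d + 1) * B) * ((a + 3) * P) := by rw [e1, e2]
    _ = B * P * ((d + 1) * (a + 3)) := by ring
  have hle : (d + 1) * (a + 3) ≤ (a + 1) * (d + 2) := by nlinarith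
  have hmul : A * Q * ((a + 1) * (d + 2)) ≤ B * P * ((a + 1) * (d + 2)) :=
    key ▸ Nat.mul_le_mul_left _ hle
  exact Nat.le_of_mul_le_mul_right hmul (by positivity)

lemma chain (n d k : ℕ) (h : d + k ≤ n) :
    Nat.choose (n + d) n * Nat.choose (n + d + k + 2) (n + 1) ≤
      Nat.choose (n + d + k) n * Nat.choose (n + d + 2) (n + 1) := by
  induction k with
  | zero => simp
  | succ k ih =>
    have ih' := ih (by omega)
    have hc' := consec n (d + k) (n + d + k) (by omega) (by omega)
    have pos : 0 < Nat.choose (n + d + k) n * Nat.choose (n + d + k + 2) (n + 1) :=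
      Nat.mul_pos (Nat.choose_pos (by omega)) (Nat.choose_pos (by omega))
    have e1 : n + d + (k + 1) + 2 = n + d + k + 3 := by ring
    have e2 : n + d + (k + 1) = n + d + k + 1 := by ring
    rw [e1, e2]
    have hmul : Nat.choose (n + d) n * Nat.choose (n + d + k + 3) (n + 1) *
        (Nat.choose (n + d + k) n * Nat.choose (n + d + k + 2) (n + 1)) ≤
        Nat.choose (n + d + k + 1) n * Nat.choose (n + d + 2) (n + 1) *
        (Nat.choose (n + d + k) n * Nat.choose (n + d + k + 2) (n + 1)) := by
      calc Nat.choose (n + d) n * Nat.choose (n + d + k + 3) (n + 1) *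
          (Nat.choose (n + d + k) n * Nat.choose (n + d + k + 2) (n + 1))
          = (Nat.choose (n + d) n * Nat.choose (n + d + k + 2) (n + 1)) *
            (Nat.choose (n + d + k) n * Nat.choose (n + d + k + 3) (n + 1)) := by ring
        _ ≤ (Nat.choose (n + d + k) n * Nat.choose (n + d + 2) (n + 1)) *
            (Nat.choose (n + d + k + 1) n * Nat.choose (n + d + k + 2) (n + 1)) :=
            Nat.mul_le_mul ih' hc'
        _ = Nat.choose (n + d + k + 1) n * Nat.choose (n + d + 2) (n + 1) *
            (Nat.choose (n + d + k) n * Nat.choose (n + d + k + 2) (n + 1)) := by ring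
    exact Nat.le_of_mul_le_mul_right hmul pos

theorem stmt_16 (r : ℕ → ℕ → ℕ)
    (hr : ∀ n k : ℕ, r n k = if k ≤ n then Nat.choose (2 * n - k) n else 0) :
    ∀ n j₁ j₂ : ℕ, j₁ < j₂ → j₂ ≤ n →
      r n j₂ * r (n + 1) j₁ ≤ r n j₁ * r (n + 1) j₂ := by
  intro n j₁ j₂ h1 h2
  rw [hr n j₂, hr n j₁, hr (n+1) j₁, hr (n+1) j₂]
  rw [if_pos h2, if_pos (le_of_lt (lt_of_lt_of_le h1 h2)), if_pos (by omega : j₁ ≤ n + 1),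
    if_pos (by omega : j₂ ≤ n + 1)]
  have e1 : 2 * n - j₂ = n + (n - j₂) := by omega
  have e2 : 2 * n - j₁ = n + (n - j₂) + (j₂ - j₁) := by omega
  have e3 : 2 * (n + 1) - j₂ = n + (n - j₂) + 2 := by omega
  have e4 : 2 * (n + 1) - j₁ = n + (n - j₂) + (j₂ - j₁) + 2 := by omega
  rw [e1, e2, e3, e4]
  exact chain n (n - j₂) (j₂ - j₁) (by omega)
end

section
/- Let J be an (n+1)×(n+1) tridiagonal matrix with non-negative entries: diagonal d_0, …, d_n, superdiagonal u_0, …, u_{n−1}, subdiagonal l_0, …, l_{n−1}. If every 2×2 minor taken from consecutive rows and consecutive columns is non-negative (d_i d_{i+1} ≥ u_i l_i for all i), then every 2×2 minor of J is non-negative (J is TP₂). -/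
theorem stmt_17 (n : ℕ) (d u l : ℕ → ℝ)
    (hd : ∀ i, 0 ≤ d i) (hu : ∀ i, 0 ≤ u i) (hl : ∀ i, 0 ≤ l i)
    (hminor : ∀ i : ℕ, i < n → u i * l i ≤ d i * d (i + 1))
    (J : Matrix (Fin (n + 1)) (Fin (n + 1)) ℝ)
    (hJ : ∀ i j : Fin (n + 1), J i j =
      if (i : ℕ) = j then d i
      else if (j : ℕ) = (i : ℕ) + 1 then u i
      else if (i : ℕ) = (j : ℕ) + 1 then l j
      else 0) :
    ∀ i₁ i₂ j₁ j₂ : Fin (n + 1), i₁ < i₂ → j₁ < j₂ →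
      0 ≤ J i₁ j₁ * J i₂ j₂ - J i₁ j₂ * J i₂ j₁ := by
  intro i₁ i₂ j₁ j₂ h12 hj12
  have h12' : (i₁ : ℕ) < i₂ := h12
  have hj12' : (j₁ : ℕ) < j₂ := hj12
  have hE : ∀ i j : Fin (n + 1), 0 ≤ J i j := by
    intro i j
    rw [hJ]
    split_ifs
    · exact hd _
    · exact hu _
    · exact hl _
    · exact le_refl 0
  by_cases hz : J i₁ j₂ = 0 ∨ J i₂ j₁ = 0
  · rcases hz with h | h <;> rw [h] <;> simp <;>
      exact mul_nonneg (hE _ _) (hE _ _)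
  · push_neg at hz
    obtain ⟨h1, h2⟩ := hz
    have c1 : (j₂ : ℕ) ≤ (i₁ : ℕ) + 1 := by
      by_contra hc
      exact h1 (by rw [hJ, if_neg (by omega), if_neg (by omega), if_neg (by omega)])
    have c2 : (i₂ : ℕ) ≤ (j₁ : ℕ) + 1 := by
      by_contra hc
      exact h2 (by rw [hJ, if_neg (by omega), if_neg (by omega), if_neg (by omega)])
    have e1 : (j₁ : ℕ) = i₁ := by omega
    have e2 : (j₂ : ℕ) = i₂ := by omega
    have e3 : (i₂ : ℕ) = (i₁ : ℕ) + 1 := by omega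
    have hlt : (i₁ : ℕ) < n := by have := i₂.isLt; omega
    have key := hminor i₁ hlt
    have dJ1 : J i₁ j₁ = d i₁ := by rw [hJ, if_pos e1.symm]
    have dJ2 : J i₂ j₂ = d ((i₁ : ℕ) + 1) := by
      rw [hJ, if_pos e2.symm]; exact congrArg d e3
    have dJ3 : J i₁ j₂ = u i₁ := by rw [hJ, if_neg (by omega), if_pos (by omega)]
    have dJ4 : J i₂ j₁ = l i₁ := by
      rw [hJ, if_neg (by omega), if_neg (by omega), if_pos (by omega)]
      exact congrArg l e1
    rw [dJ1, dJ2, dJ3, dJ4]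
    linarith
end

section
/- Let L be an (n+1)×(n+1) lower bidiagonal matrix with 1's on the diagonal and non-negative subdiagonal entries l_0, …, l_{n−1}, and let U be upper bidiagonal with non-negative diagonal entries k_0, …, k_n and non-negative superdiagonal entries r_0, …, r_{n−1}. Then L·U is a tridiagonal matrix with diagonal entries (L·U)(0,0) = k_0 and (L·U)(i,i) = k_i + l_{i−1} r_{i−1} for i ≥ 1, superdiagonal (L·U)(i,i+1) = r_i, and subdiagonal (L·U)(i+1,i) = l_i k_i, and L·U is totally positive. -/
open Matrix Finset

/-- A minor (with strictly increasing rows/cols) of a lower-bidiagonal-pattern matrix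
equals the product of the diagonal entries of the submatrix. -/
lemma bidiag_minor {N K : ℕ} (M : Matrix (Fin N) (Fin N) ℝ)
    (h0 : ∀ i j : Fin N, M i j ≠ 0 → (j : ℕ) ≤ (i : ℕ) ∧ (i : ℕ) ≤ (j : ℕ) + 1)
    (row col : Fin K → Fin N) (hrow : StrictMono row) (hcol : StrictMono col) :
    (M.submatrix row col).det = ∏ b, M (row b) (col b) := by
  rw [Matrix.det_apply]
  rw [Finset.sum_eq_single (1 : Equiv.Perm (Fin K))]
  · simp [Matrix.submatrix_apply]
  · intro σ _ hσ
    rcases eq_or_ne (∏ i, (M.submatrix row col) (σ i) i) 0 with h | h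
    · rw [h, smul_zero]
    · exfalso
      apply hσ
      have hne : ∀ i, M (row (σ i)) (col i) ≠ 0 := by
        intro i hz
        exact h (Finset.prod_eq_zero (Finset.mem_univ i) (by simpa using hz))
      have hmono : StrictMono (σ : Fin K → Fin K) := by
        intro a b hab
        have h1 := (h0 _ _ (hne a)).2
        have h2 := (h0 _ _ (hne b)).1
        have hcb : (col a : ℕ) < (col b : ℕ) := hcol hab
        have hrr : (row (σ a) : ℕ) ≤ (row (σ b) : ℕ) := by omega
        have hle : σ a ≤ σ b := by
          by_contra hlt
          push_neg at hlt
          exact absurd (hrow hlt) (by simpa using (not_lt.mpr hrr))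
        rcases lt_or_eq_of_le hle with h' | h'
        · exact h'
        · exact absurd (σ.injective h') hab.ne
      haveI : WellFoundedLT (Fin K) := inferInstance
      have hfun : (⇑σ) = id :=
        (StrictMono.range_inj (f := ⇑σ) (g := (id : Fin K → Fin K)) hmono strictMono_id).mp
          (by rw [σ.surjective.range_eq, Set.range_id])
      exact Equiv.ext fun x => congrFun hfun x
  · intro h; exact absurd (Finset.mem_univ _) h

/-- Cauchy–Binet formula. -/
lemma cauchy_binet {K m : ℕ} (A : Matrix (Fin K) (Fin m) ℝ) (B : Matrix (Fin m) (Fin K) ℝ) :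
    (A * B).det = ∑ s : {s : Finset (Fin m) // s.card = K},
      (A.submatrix id (s.1.orderEmbOfFin s.2)).det * (B.submatrix (s.1.orderEmbOfFin s.2) id).det := by
  classical
  have step1 : (A * B).det
      = ∑ f : Fin K → Fin m, (∏ i, A i (f i)) * (B.submatrix f id).det := by
    have h1 : (A * B) = fun i => ∑ j, A i j • B j := by
      funext i x
      simp [Matrix.mul_apply]
    calc (A * B).det
        = Matrix.detRowAlternating (fun i => ∑ j, A i j • B j) :=
          congrArg (fun M => Matrix.detRowAlternating M) h1
      _ = ∑ f : Fin K → Fin m,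
            Matrix.detRowAlternating (fun i => A i (f i) • B (f i)) :=
          (Matrix.detRowAlternating (R := ℝ) (n := Fin K)).toMultilinearMap.map_sum
            (g := fun i j => A i j • B j)
      _ = ∑ f : Fin K → Fin m, (∏ i, A i (f i)) * (B.submatrix f id).det := by
          refine Finset.sum_congr rfl fun f _ => ?_
          have hsm : Matrix.detRowAlternating (fun i => A i (f i) • B (f i))
              = (∏ i, A i (f i)) • Matrix.detRowAlternating (fun i => B (f i)) :=
            (Matrix.detRowAlternating (R := ℝ) (n := Fin K)).toMultilinearMap.map_smul_univ
              (fun i => A i (f i)) (fun i => B (f i))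
          rw [hsm, smul_eq_mul]
          rfl
  rw [step1]
  have step2 : ∑ f : Fin K → Fin m, (∏ i, A i (f i)) * (B.submatrix f id).det
      = ∑ f : {f : Fin K → Fin m // Function.Injective f},
          (∏ i, A i (f.1 i)) * (B.submatrix f.1 id).det := by
    rw [← Finset.sum_subtype (Finset.univ.filter (fun f : Fin K → Fin m => Function.Injective f))
      (by simp) (fun f => (∏ i, A i (f i)) * (B.submatrix f id).det)]
    refine (Finset.sum_filter_of_ne fun f _ hne => ?_).symm
    by_contra hinj
    simp only [Function.Injective, not_forall] at hinj
    obtain ⟨a, b, hab, hne'⟩ := hinj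
    have : (B.submatrix f id).det = 0 :=
      Matrix.det_zero_of_row_eq hne' (by funext x; simp [Matrix.submatrix_apply, hab])
    rw [this, mul_zero] at hne
    exact hne rfl
  rw [step2]
  -- bijection between injective functions and (subset, permutation) pairs
  have ebij : Function.Bijective
      (fun p : {s : Finset (Fin m) // s.card = K} × Equiv.Perm (Fin K) =>
        (⟨p.1.1.orderEmbOfFin p.1.2 ∘ p.2,
          (p.1.1.orderEmbOfFin p.1.2).injective.comp p.2.injective⟩ :
          {f : Fin K → Fin m // Function.Injective f})) := by
    constructor
    · rintro ⟨s, σ⟩ ⟨t, τ⟩ h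
      have hfun : (s.1.orderEmbOfFin s.2) ∘ ⇑σ = (t.1.orderEmbOfFin t.2) ∘ ⇑τ :=
        congrArg Subtype.val h
      have hrange : (s.1 : Set (Fin m)) = (t.1 : Set (Fin m)) := by
        rw [← Finset.range_orderEmbOfFin s.1 s.2, ← Finset.range_orderEmbOfFin t.1 t.2]
        rw [← σ.surjective.range_comp (s.1.orderEmbOfFin s.2),
            ← τ.surjective.range_comp (t.1.orderEmbOfFin t.2)]
        exact congrArg Set.range hfun
      have hst : s = t := Subtype.ext (Finset.coe_injective hrange)
      subst hst
      have hστ : ⇑σ = ⇑τ := by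
        funext x
        exact (s.1.orderEmbOfFin s.2).injective (congrFun hfun x)
      exact Prod.ext rfl (Equiv.ext fun x => congrFun hστ x)
    · rintro ⟨f, hf⟩
      have hs : (Finset.univ.image f).card = K := by
        rw [Finset.card_image_of_injective _ hf, Finset.card_univ, Fintype.card_fin]
      set s : Finset (Fin m) := Finset.univ.image f with hs_def
      have hmem : ∀ i, f i ∈ s := fun i => Finset.mem_image_of_mem f (Finset.mem_univ i)
      let σ : Fin K → Fin K := fun i => (s.orderIsoOfFin hs).symm ⟨f i, hmem i⟩
      have hσdef : ∀ i, (s.orderIsoOfFin hs) (σ i) = ⟨f i, hmem i⟩ := fun i =>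
        OrderIso.apply_symm_apply _ _
      have hσinj : Function.Injective σ := by
        intro a b hab
        have h2 : (⟨f a, hmem a⟩ : {x // x ∈ s}) = ⟨f b, hmem b⟩ := by
          rw [← hσdef a, ← hσdef b, hab]
        exact hf (congrArg Subtype.val h2)
      have hσbij : Function.Bijective σ := Finite.injective_iff_bijective.mp hσinj
      refine ⟨⟨⟨s, hs⟩, Equiv.ofBijective σ hσbij⟩, ?_⟩
      refine Subtype.ext ?_
      funext i
      show s.orderEmbOfFin hs (σ i) = f i
      have : (s.orderIsoOfFin hs (σ i) : Fin m) = s.orderEmbOfFin hs (σ i) :=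
        Finset.coe_orderIsoOfFin_apply s hs (σ i)
      rw [← this]
      show ((s.orderIsoOfFin hs) ((s.orderIsoOfFin hs).symm ⟨f i, hmem i⟩) : Fin m) = f i
      rw [OrderIso.apply_symm_apply]
  rw [← Fintype.sum_bijective _ ebij _
    (fun f => (∏ i, A i (f.1 i)) * (B.submatrix f.1 id).det) (fun p => rfl)]
  rw [Fintype.sum_prod_type]
  refine Finset.sum_congr rfl fun s _ => ?_
  set g := s.1.orderEmbOfFin s.2 with hg
  have hBperm : ∀ σ : Equiv.Perm (Fin K),
      (B.submatrix (⇑g ∘ ⇑σ) id).det = (Equiv.Perm.sign σ : ℝ) * (B.submatrix (⇑g) id).det := by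
    intro σ
    have : B.submatrix (⇑g ∘ ⇑σ) id = (B.submatrix (⇑g) id).submatrix (⇑σ) id := by
      rw [Matrix.submatrix_submatrix]
      rfl
    rw [this, Matrix.det_permute]
  calc ∑ σ : Equiv.Perm (Fin K), (∏ i, A i ((⇑g ∘ ⇑σ) i)) * (B.submatrix (⇑g ∘ ⇑σ) id).det
      = ∑ σ : Equiv.Perm (Fin K),
          ((Equiv.Perm.sign σ : ℝ) * ∏ i, (Aᵀ.submatrix (⇑g) id) (σ i) i)
            * (B.submatrix (⇑g) id).det := by
        refine Finset.sum_congr rfl fun σ _ => ?_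
        rw [hBperm σ]
        simp only [Matrix.submatrix_apply, Matrix.transpose_apply, Function.comp_apply, id]
        ring
    _ = (Aᵀ.submatrix (⇑g) id).det * (B.submatrix (⇑g) id).det := by
        rw [← Finset.sum_mul, ← Matrix.det_apply']
    _ = (A.submatrix id (⇑g)).det * (B.submatrix (⇑g) id).det := by
        rw [← Matrix.det_transpose (A.submatrix id ⇑g), Matrix.transpose_submatrix]

theorem stmt_18 (n : ℕ) (l k r : ℕ → ℝ)
    (hl : ∀ i, 0 ≤ l i) (hk : ∀ i, 0 ≤ k i) (hr : ∀ i, 0 ≤ r i)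
    (L U : Matrix (Fin (n + 1)) (Fin (n + 1)) ℝ)
    (hL : ∀ i j : Fin (n + 1), L i j =
      if (i : ℕ) = j then 1
      else if (i : ℕ) = (j : ℕ) + 1 then l j
      else 0)
    (hU : ∀ i j : Fin (n + 1), U i j =
      if (i : ℕ) = j then k i
      else if (j : ℕ) = (i : ℕ) + 1 then r i
      else 0) :
    (∀ i j : Fin (n + 1), (L * U) i j =
      if (i : ℕ) = j then
        (if (i : ℕ) = 0 then k 0 else k i + l ((i : ℕ) - 1) * r ((i : ℕ) - 1))
      else if (j : ℕ) = (i : ℕ) + 1 then r i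
      else if (i : ℕ) = (j : ℕ) + 1 then l j * k j
      else 0)
    ∧ TotallyPos (L * U) := by
  constructor
  · intro i j
    rw [Matrix.mul_apply]
    have hsummand : ∀ m : Fin (n + 1), L i m * U m j
        = (if m = i then U m j else 0)
          + (if (i : ℕ) = (m : ℕ) + 1 then l m * U m j else 0) := by
      intro m
      rw [hL i m]
      by_cases h1 : (i : ℕ) = (m : ℕ)
      · have hm : m = i := Fin.ext h1.symm
        rw [if_pos h1, if_pos hm, if_neg (show ¬(i : ℕ) = (m : ℕ) + 1 by omega), one_mul,
          add_zero]
      · have hm : ¬ m = i := fun hm => h1 (by rw [hm])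
        rw [if_neg h1, if_neg hm, zero_add]
        by_cases h2 : (i : ℕ) = (m : ℕ) + 1
        · rw [if_pos h2, if_pos h2]
        · rw [if_neg h2, if_neg h2, zero_mul]
    rw [Finset.sum_congr rfl (fun m _ => hsummand m), Finset.sum_add_distrib]
    have e1 : ∑ m : Fin (n + 1), (if m = i then U m j else 0) = U i j := by
      simp [Finset.sum_ite_eq']
    rw [e1]
    rcases Fin.eq_zero_or_eq_succ i with rfl | ⟨i', rfl⟩
    · have e2 : ∑ m : Fin (n + 1),
          (if ((0 : Fin (n + 1)) : ℕ) = (m : ℕ) + 1 then l m * U m j else 0) = 0 := by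
        refine Finset.sum_eq_zero fun m _ => ?_
        simp
      rw [e2, add_zero, hU]
      simp only [Fin.val_zero]
      split_ifs <;> first | rfl | omega | (simp; intro h; contradiction) | simp | exact (by assumption : False).elim
    · have e2 : ∑ m : Fin (n + 1),
          (if ((Fin.succ i' : Fin (n + 1)) : ℕ) = (m : ℕ) + 1 then l m * U m j else 0)
          = l i' * U (Fin.castSucc i') j := by
        have hiff : ∀ m : Fin (n + 1),
            (((Fin.succ i' : Fin (n + 1)) : ℕ) = (m : ℕ) + 1) ↔ m = Fin.castSucc i' := by
          intro m
          rw [Fin.ext_iff]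
          simp [Fin.val_succ, Fin.coe_castSucc]
          omega
        rw [Finset.sum_congr rfl (fun m _ => if_congr (hiff m) rfl rfl)]
        rw [Finset.sum_ite_eq' Finset.univ (Fin.castSucc i') (fun m => l m * U m j)]
        simp [Fin.coe_castSucc]
      rw [e2, hU, hU]
      simp only [Fin.val_succ, Fin.coe_castSucc]
      split_ifs
      all_goals try rfl
      all_goals try omega
      all_goals try exact (by assumption : False).elim
      all_goals try (rw [show (i' : ℕ) = (j : ℕ) from by assumption])
      all_goals ring
  · intro K row col hrow hcol
    have h0L : ∀ i j : Fin (n + 1), L i j ≠ 0 → (j : ℕ) ≤ (i : ℕ) ∧ (i : ℕ) ≤ (j : ℕ) + 1 := by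
      intro i j hne
      rw [hL] at hne
      split_ifs at hne with h1 h2
      · omega
      · omega
      · exact absurd rfl hne
    have h0U : ∀ i j : Fin (n + 1), Uᵀ i j ≠ 0 → (j : ℕ) ≤ (i : ℕ) ∧ (i : ℕ) ≤ (j : ℕ) + 1 := by
      intro i j hne
      rw [Matrix.transpose_apply, hU] at hne
      split_ifs at hne with h1 h2
      · omega
      · omega
      · exact absurd rfl hne
    have hLpos : ∀ i j : Fin (n + 1), 0 ≤ L i j := by
      intro i j
      rw [hL]
      split_ifs
      · norm_num
      · exact hl _
      · exact le_refl 0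
    have hUpos : ∀ i j : Fin (n + 1), 0 ≤ U i j := by
      intro i j
      rw [hU]
      split_ifs
      · exact hk _
      · exact hr _
      · exact le_refl 0
    unfold TotallyPos at *
    rw [Matrix.submatrix_mul L U row id col Function.bijective_id, cauchy_binet]
    refine Finset.sum_nonneg fun s _ => ?_
    have hg : StrictMono ⇑(s.1.orderEmbOfFin s.2) := (s.1.orderEmbOfFin s.2).strictMono
    have hA : (L.submatrix row id).submatrix id ⇑(s.1.orderEmbOfFin s.2)
        = L.submatrix row ⇑(s.1.orderEmbOfFin s.2) := by
      rw [Matrix.submatrix_submatrix]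
      simp [Function.comp]
    have hB : (U.submatrix id col).submatrix ⇑(s.1.orderEmbOfFin s.2) id
        = U.submatrix ⇑(s.1.orderEmbOfFin s.2) col := by
      rw [Matrix.submatrix_submatrix]
      simp [Function.comp]
    rw [hA, hB]
    have hdetA : (L.submatrix row ⇑(s.1.orderEmbOfFin s.2)).det
        = ∏ b, L (row b) (s.1.orderEmbOfFin s.2 b) :=
      bidiag_minor L h0L row _ hrow hg
    have hdetB : (U.submatrix ⇑(s.1.orderEmbOfFin s.2) col).det
        = ∏ b, Uᵀ (col b) (s.1.orderEmbOfFin s.2 b) := by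
      rw [← Matrix.det_transpose (U.submatrix _ col), Matrix.transpose_submatrix]
      exact bidiag_minor Uᵀ h0U col _ hcol hg
    rw [hdetA, hdetB]
    exact mul_nonneg (Finset.prod_nonneg fun b _ => hLpos _ _)
      (Finset.prod_nonneg fun b _ => hUpos _ _)
end
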